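/- arXiv:1509.03688 — 4 statements merged into one kernel-verified Lean document; each statement's English description precedes it below -/
import Mathlib

section
/- Let n ≥ 1, let d : {1,…,n} → ℕ, and define φ(x) = Σ_{i=1}^n x_i^{2 d_i}. Let p be a real multivariate polynomial in n variables such that for every monomial m appearing in p with nonzero coefficient and for every index i, 2 d_i ≤ deg(m), where deg(m) is the total degree of m. Then p is φ-bounded: for every bounded set S ⊆ ℝ^n there exists a constant Λ such that p(x) ≤ Λ · φ(x) for all x ∈ S. -/
/-- **φ-boundedness of polynomials with large enough monomial degrees.**
Let `φ x = ∑ i, x i ^ (2 * d i)`. If every monomial `m` of `p` (with nonzero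
coefficient) satisfies `2 * d i ≤ deg m` for every index `i`, then `p` is
`φ`-bounded: on every bounded set `S ⊆ ℝⁿ` there is `Λ` with
`p x ≤ Λ * φ x` for all `x ∈ S`. -/
theorem phi_bounded_of_monomial_degrees
    (n : ℕ) (hn : 1 ≤ n) (d : Fin n → ℕ) (p : MvPolynomial (Fin n) ℝ)
    (hdeg : ∀ m ∈ p.support, ∀ i : Fin n, 2 * d i ≤ m.sum fun _ e => e) :
    ∀ S : Set (Fin n → ℝ), Bornology.IsBounded S →
      ∃ Λ : ℝ, ∀ x ∈ S, MvPolynomial.eval x p ≤ Λ * ∑ i, x i ^ (2 * d i) := by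
  intro S hS
  obtain ⟨R, hR⟩ := hS.exists_norm_le
  set R' : ℝ := max R 1 with hR'def
  have hR1 : (1:ℝ) ≤ R' := le_max_right _ _
  have hR0 : (0:ℝ) ≤ R' := le_trans zero_le_one hR1
  set D := p.totalDegree with hD
  refine ⟨(∑ m ∈ p.support, |p.coeff m|) * R' ^ D, ?_⟩
  intro x hx
  have hxR : ∀ i, |x i| ≤ R' := fun i =>
    le_trans (le_trans (norm_le_pi_norm x i) (hR x hx)) (le_max_left _ _)
  have hφ0 : ∀ i, 0 ≤ x i ^ (2 * d i) := fun i => by rw [pow_mul]; exact pow_nonneg (sq_nonneg _) _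
  have hφsum : 0 ≤ ∑ i, x i ^ (2 * d i) :=
    Finset.sum_nonneg fun i _ => hφ0 i
  obtain ⟨j, -, hj⟩ := Finset.exists_max_image Finset.univ (fun i => |x i|)
    ⟨⟨0, hn⟩, Finset.mem_univ _⟩
  set M := |x j| with hMdef
  have hM0 : 0 ≤ M := abs_nonneg _
  have hMR : M ≤ R' := hxR j
  have hφge : M ^ (2 * d j) ≤ ∑ i, x i ^ (2 * d i) := by
    have h1 : M ^ (2 * d j) = x j ^ (2 * d j) := by
      rw [hMdef, pow_mul, pow_mul, sq_abs]
    rw [h1]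
    exact Finset.single_le_sum (fun i _ => hφ0 i) (Finset.mem_univ j)
  have key : ∀ m ∈ p.support,
      ∏ i, |x i| ^ m i ≤ R' ^ D * ∑ i, x i ^ (2 * d i) := by
    intro m hm
    have hksum : (m.sum fun _ e => e) = ∑ i, m i :=
      Finsupp.sum_fintype _ _ fun i => rfl
    have hdk : 2 * d j ≤ ∑ i, m i := by
      rw [← hksum]; exact hdeg m hm j
    have hkD : (∑ i, m i) ≤ D := by
      rw [← hksum]
      exact MvPolynomial.le_totalDegree hm
    calc ∏ i, |x i| ^ m i
        ≤ ∏ i, M ^ m i :=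
          Finset.prod_le_prod (fun i _ => by positivity)
            (fun i _ => pow_le_pow_left₀ (abs_nonneg _) (hj i (Finset.mem_univ i)) _)
      _ = M ^ (∑ i, m i) := by rw [Finset.prod_pow_eq_pow_sum]
      _ = M ^ ((∑ i, m i) - 2 * d j) * M ^ (2 * d j) := by
          rw [← pow_add, Nat.sub_add_cancel hdk]
      _ ≤ R' ^ D * ∑ i, x i ^ (2 * d i) := by
          apply mul_le_mul _ hφge (by positivity) (by positivity)
          calc M ^ ((∑ i, m i) - 2 * d j) ≤ R' ^ ((∑ i, m i) - 2 * d j) :=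
                pow_le_pow_left₀ hM0 hMR _
            _ ≤ R' ^ D := pow_le_pow_right₀ hR1 (le_trans (Nat.sub_le _ _) hkD)
  rw [MvPolynomial.eval_eq']
  calc ∑ m ∈ p.support, p.coeff m * ∏ i, x i ^ m i
      ≤ ∑ m ∈ p.support, |p.coeff m| * ∏ i, |x i| ^ m i := by
        apply Finset.sum_le_sum
        intro m _
        calc p.coeff m * ∏ i, x i ^ m i
            ≤ |p.coeff m * ∏ i, x i ^ m i| := le_abs_self _
          _ = |p.coeff m| * ∏ i, |x i| ^ m i := by
              rw [abs_mul, Finset.abs_prod]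
              simp [abs_pow]
    _ ≤ ∑ m ∈ p.support, |p.coeff m| * (R' ^ D * ∑ i, x i ^ (2 * d i)) := by
        apply Finset.sum_le_sum
        intro m hm
        exact mul_le_mul_of_nonneg_left (key m hm) (abs_nonneg _)
    _ = (∑ m ∈ p.support, |p.coeff m|) * R' ^ D * ∑ i, x i ^ (2 * d i) := by
        rw [← Finset.sum_mul, mul_assoc]
end

section
/- Let t_1 < t_2 be real numbers with δ = t_2 − t_1, let λ > 1, ε > 0, and Λ_1, Λ_2 ≥ 0 be real constants with e^{Λ_2 δ} < λ. Let w, p : ℝ → ℝ be differentiable on [t_1, t_2] with p(t) > 0 for all t ∈ [t_1, t_2], and suppose that for all t ∈ [t_1, t_2]: w'(t) ≤ Λ_1 · p(t) and p'(t) ≤ Λ_2 · p(t). If moreover w(t_1) ≤ −ε · p(t_1) and w(t_2) ≥ −(ε/λ) · p(t_2), then ε ≤ λ Λ_1 e^{Λ_2 δ} δ / (λ − e^{Λ_2 δ}). -/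
/-!
Two Grönwall estimates on `[t₁, t₂]`: from `p' ≤ Λ₂ p` one gets
`p t ≤ p t₁ e^{Λ₂ δ}`, hence `w' ≤ Λ₁ p t₁ e^{Λ₂ δ}` and `w t₂ ≤ w t₁ + Λ₁ p t₁ e^{Λ₂ δ} δ`.
Chaining `-(ε/λ) p t₁ e^{Λ₂ δ} ≤ -(ε/λ) p t₂ ≤ w t₂` with `w t₁ ≤ -ε p t₁` and dividing
by `p t₁ > 0` gives `ε (λ - e^{Λ₂ δ}) ≤ λ Λ₁ e^{Λ₂ δ} δ`.
-/

open Set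

section Gronwall

variable {f f' : ℝ → ℝ} {a b : ℝ}

theorem le_gronwallBound_of_hasDerivWithinAt_Icc {K ε : ℝ}
    (hf : ∀ x ∈ Icc a b, HasDerivWithinAt f (f' x) (Icc a b) x)
    (bound : ∀ x ∈ Ico a b, f' x ≤ K * f x + ε) :
    ∀ x ∈ Icc a b, f x ≤ gronwallBound (f a) K ε (x - a) :=
  le_gronwallBound_of_liminf_deriv_right_le (fun x hx => (hf x hx).continuousWithinAt)
    (fun x hx _ hr => ((hf x (Ico_subset_Icc_self hx)).mono_of_mem_nhdsWithin
      (Icc_mem_nhdsGE_of_mem hx)).liminf_right_slope_le hr)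
    le_rfl bound

theorem le_mul_exp_of_hasDerivWithinAt_le_mul {K : ℝ}
    (hf : ∀ x ∈ Icc a b, HasDerivWithinAt f (f' x) (Icc a b) x)
    (bound : ∀ x ∈ Ico a b, f' x ≤ K * f x) :
    ∀ x ∈ Icc a b, f x ≤ f a * Real.exp (K * (x - a)) := by
  simpa only [gronwallBound_ε0, add_zero] using
    le_gronwallBound_of_hasDerivWithinAt_Icc (ε := 0) hf (by simpa only [add_zero] using bound)

theorem le_add_mul_sub_of_hasDerivWithinAt_le {C : ℝ}
    (hf : ∀ x ∈ Icc a b, HasDerivWithinAt f (f' x) (Icc a b) x)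
    (bound : ∀ x ∈ Ico a b, f' x ≤ C) :
    ∀ x ∈ Icc a b, f x ≤ f a + C * (x - a) := by
  simpa only [gronwallBound_K0] using
    le_gronwallBound_of_hasDerivWithinAt_Icc (K := 0) hf
      (by simpa only [zero_mul, zero_add] using bound)

end Gronwall

theorem dwell_time_bound_general
    (t₁ t₂ δ lam ε Λ₁ Λ₂ : ℝ) (w p w' p' : ℝ → ℝ)
    (ht : t₁ < t₂) (hδ : δ = t₂ - t₁)
    (hε : 0 < ε) (hΛ₁ : 0 ≤ Λ₁) (hΛ₂ : 0 ≤ Λ₂)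
    (hexp : Real.exp (Λ₂ * δ) < lam)
    (hw : ∀ t ∈ Icc t₁ t₂, HasDerivWithinAt w (w' t) (Icc t₁ t₂) t)
    (hp : ∀ t ∈ Icc t₁ t₂, HasDerivWithinAt p (p' t) (Icc t₁ t₂) t)
    (hppos : ∀ t ∈ Icc t₁ t₂, 0 < p t)
    (hw' : ∀ t ∈ Icc t₁ t₂, w' t ≤ Λ₁ * p t)
    (hp' : ∀ t ∈ Icc t₁ t₂, p' t ≤ Λ₂ * p t)
    (hw₁ : w t₁ ≤ -ε * p t₁)
    (hw₂ : w t₂ ≥ -(ε / lam) * p t₂) :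
    ε ≤ lam * Λ₁ * Real.exp (Λ₂ * δ) * δ / (lam - Real.exp (Λ₂ * δ)) := by
  set E := Real.exp (Λ₂ * δ)
  have ht₁ : t₁ ∈ Icc t₁ t₂ := left_mem_Icc.2 ht.le
  have ht₂ : t₂ ∈ Icc t₁ t₂ := right_mem_Icc.2 ht.le
  have hp₁ := hppos t₁ ht₁
  have hp_le : ∀ t ∈ Icc t₁ t₂, p t ≤ p t₁ * E := fun t htI => by
    refine (le_mul_exp_of_hasDerivWithinAt_le_mul hp
      (fun s hs => hp' s (Ico_subset_Icc_self hs)) t htI).trans ?_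
    gcongr
    exact Real.exp_le_exp.2 (mul_le_mul_of_nonneg_left (by linarith [htI.2]) hΛ₂)
  have hw_le : w t₂ ≤ w t₁ + Λ₁ * (p t₁ * E) * δ := by
    refine hδ ▸ le_add_mul_sub_of_hasDerivWithinAt_le hw (fun s hs => ?_) t₂ ht₂
    exact (hw' s (Ico_subset_Icc_self hs)).trans
      (mul_le_mul_of_nonneg_left (hp_le s (Ico_subset_Icc_self hs)) hΛ₁)
  have hlam₀ : 0 < lam := (Real.exp_pos _).trans hexp
  have hp₂ : -(ε / lam) * (p t₁ * E) ≤ -(ε / lam) * p t₂ :=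
    mul_le_mul_of_nonpos_left (hp_le t₂ ht₂) (neg_nonpos.2 (div_pos hε hlam₀).le)
  have hchain_p : -(ε / lam) * E * p t₁ ≤ (-ε + Λ₁ * E * δ) * p t₁ := by linarith
  have hchain : -(ε / lam) * E ≤ -ε + Λ₁ * E * δ := le_of_mul_le_mul_right hchain_p hp₁
  rw [le_div_iff₀ (sub_pos.2 hexp)]
  calc ε * (lam - E) = lam * (-(ε / lam) * E + ε) := by field_simp; ring
    _ ≤ lam * (Λ₁ * E * δ) := by gcongr; linarith
    _ = lam * Λ₁ * E * δ := by ring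

/-- **Dwell-time inequality.** If on `[t₁, t₂]` the derivative of `w` is bounded
by `Λ₁ * p` and the derivative of `p` by `Λ₂ * p` (with `p > 0`), and
`w t₁ ≤ -ε * p t₁` while `w t₂ ≥ -(ε / λ) * p t₂`, with `e^{Λ₂ δ} < λ` for
`δ = t₂ - t₁`, then `ε ≤ λ Λ₁ e^{Λ₂ δ} δ / (λ - e^{Λ₂ δ})`. -/
theorem dwell_time_bound
    (t₁ t₂ δ lam ε Λ₁ Λ₂ : ℝ) (w p w' p' : ℝ → ℝ)
    (ht : t₁ < t₂) (hδ : δ = t₂ - t₁)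
    (hlam : 1 < lam) (hε : 0 < ε) (hΛ₁ : 0 ≤ Λ₁) (hΛ₂ : 0 ≤ Λ₂)
    (hexp : Real.exp (Λ₂ * δ) < lam)
    (hw : ∀ t ∈ Icc t₁ t₂, HasDerivWithinAt w (w' t) (Icc t₁ t₂) t)
    (hp : ∀ t ∈ Icc t₁ t₂, HasDerivWithinAt p (p' t) (Icc t₁ t₂) t)
    (hppos : ∀ t ∈ Icc t₁ t₂, 0 < p t)
    (hw' : ∀ t ∈ Icc t₁ t₂, w' t ≤ Λ₁ * p t)
    (hp' : ∀ t ∈ Icc t₁ t₂, p' t ≤ Λ₂ * p t)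
    (hw₁ : w t₁ ≤ -ε * p t₁)
    (hw₂ : w t₂ ≥ -(ε / lam) * p t₂) :
    ε ≤ lam * Λ₁ * Real.exp (Λ₂ * δ) * δ / (lam - Real.exp (Λ₂ * δ)) :=
  dwell_time_bound_general t₁ t₂ δ lam ε Λ₁ Λ₂ w p w' p' ht hδ hε hΛ₁ hΛ₂ hexp hw hp hppos hw' hp'
    hw₁ hw₂
end

section
/- Let P ⊆ ℝ^n be a nonempty compact set with nonempty boundary ∂P, let V : ℝ^n → ℝ be continuous, let β = min_{y ∈ ∂P} V(y), and let P* = { y ∈ P : V(y) < β }. Let x : [0, ∞) → ℝ^n be continuous with x(0) ∈ P*, and suppose that for every t ≥ 0 with x(t) ∈ P, the function s ↦ V(x(s)) has a right derivative at t which is ≤ 0. Then x(t) ∈ P* for all t ≥ 0; that is, P* is positively invariant for the trajectory. -/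
open Set Filter Topology

/-! Since `P` is closed and `V ≥ β` on `∂P`, the region `P*` is open. As `V (x 0) < β`, the
closed set `K = P ∩ {V ≤ V (x 0)}` lies in `P*`, and the trajectory cannot leave it: from a
point of `K` it first moves inside the open set `P*`, where `V ∘ x` has nonpositive right
derivative and hence does not increase. Continuous induction along `[0, ∞)` finishes. -/

theorem antitoneOn_of_hasDerivWithinAt_Ici_nonpos {f : ℝ → ℝ} {s : Set ℝ}
    (hs : s.OrdConnected) (hf : ContinuousOn f s)
    (hf' : ∀ t ∈ s, ∃ D : ℝ, D ≤ 0 ∧ HasDerivWithinAt f D (Ici t) t) : AntitoneOn f s := by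
  intro a ha b hb hab
  have hIcc : Icc a b ⊆ s := hs.out ha hb
  choose! f' hf'_nonpos hf'_deriv using hf'
  exact image_le_of_deriv_right_le_deriv_boundary (hf.mono hIcc)
    (fun t ht ↦ hf'_deriv t (hIcc (Ico_subset_Icc_self ht))) (B := fun _ ↦ f a) le_rfl
    continuousOn_const
    (fun t _ ↦ hasDerivWithinAt_const t _ (f a))
    (fun t ht ↦ hf'_nonpos t (hIcc (Ico_subset_Icc_self ht))) ⟨hab, le_rfl⟩

theorem IsClosed.mapsTo_Ici_of_forall_eventually_mem {X : Type*} [TopologicalSpace X]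
    {K : Set X} (hK : IsClosed K) {x : ℝ → X} {a : ℝ} (hx : ContinuousOn x (Ici a))
    (ha : x a ∈ K) (hstep : ∀ t, a ≤ t → x t ∈ K → ∀ᶠ u in 𝓝[>] t, x u ∈ K) :
    MapsTo x (Ici a) K := by
  intro T hT
  have hclosed : IsClosed (x ⁻¹' K ∩ Icc a T) := by
    rw [inter_comm]
    exact (hx.mono Icc_subset_Ici_self).preimage_isClosed_of_isClosed isClosed_Icc hK
  exact hclosed.Icc_subset_of_forall_mem_nhdsWithin ha
    (fun t ht ↦ hstep t ht.2.1 ht.1) ⟨hT, le_rfl⟩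

theorem IsClosed.isOpen_inter_setOf_lt {X : Type*} [TopologicalSpace X] {P : Set X}
    (hP : IsClosed P) {V : X → ℝ} (hV : Continuous V) {β : ℝ}
    (hβ : β ∈ lowerBounds (V '' frontier P)) : IsOpen (P ∩ {y | V y < β}) := by
  have hint : P ∩ {y | V y < β} = interior P ∩ {y | V y < β} := by
    refine Subset.antisymm (fun y ⟨hyP, hyV⟩ ↦ ⟨?_, hyV⟩)
      (inter_subset_inter_left _ interior_subset)
    by_contra hy
    exact (hβ ⟨y, hP.frontier_eq ▸ ⟨hyP, hy⟩, rfl⟩).not_gt hyV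
  rw [hint]
  exact isOpen_interior.inter (isOpen_lt hV continuous_const)

theorem sublevel_region_positively_invariant_general
    (n : ℕ) (P : Set (Fin n → ℝ)) (hPc : IsCompact P)
    (V : (Fin n → ℝ) → ℝ) (hV : Continuous V)
    (β : ℝ) (hβ : IsLeast (V '' frontier P) β)
    (x : ℝ → (Fin n → ℝ)) (hx : ContinuousOn x (Ici 0))
    (hx0 : x 0 ∈ P ∩ {y | V y < β})
    (hderiv : ∀ t : ℝ, 0 ≤ t → x t ∈ P →
      ∃ D : ℝ, D ≤ 0 ∧ HasDerivWithinAt (fun s => V (x s)) D (Ici t) t) :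
    ∀ t : ℝ, 0 ≤ t → x t ∈ P ∩ {y | V y < β} := by
  have hopen := hPc.isClosed.isOpen_inter_setOf_lt hV hβ.2
  have hK : IsClosed (P ∩ {y | V y ≤ V (x 0)}) :=
    hPc.isClosed.inter (isClosed_le hV continuous_const)
  have hKsub : P ∩ {y | V y ≤ V (x 0)} ⊆ P ∩ {y | V y < β} :=
    inter_subset_inter_right P fun y (hy : V y ≤ V (x 0)) ↦ hy.trans_lt hx0.2
  refine fun T hT ↦ hKsub <|
    hK.mapsTo_Ici_of_forall_eventually_mem hx ⟨hx0.1, le_refl (V (x 0))⟩ ?_ hT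
  intro t ht hxt
  obtain ⟨t₁, ht₁, hstay⟩ := mem_nhdsGE_iff_exists_Ico_subset.1 <|
    ((hx t ht).mono (Ici_subset_Ici.2 ht)).preimage_mem_nhdsWithin
      (hopen.mem_nhds (hKsub hxt))
  have hanti : AntitoneOn (fun s ↦ V (x s)) (Ico t t₁) :=
    antitoneOn_of_hasDerivWithinAt_Ici_nonpos ordConnected_Ico
      (hV.comp_continuousOn (hx.mono fun s hs ↦ ht.trans hs.1))
      (fun s hs ↦ hderiv s (ht.trans hs.1) (hstay hs).1)
  filter_upwards [Ioo_mem_nhdsGT ht₁] with u hu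
  exact ⟨(hstay ⟨hu.1.le, hu.2⟩).1,
    (hanti ⟨le_rfl, ht₁⟩ ⟨hu.1.le, hu.2⟩ hu.1.le).trans hxt.2⟩

/-- **Positive invariance of the inner sublevel region.** Let `P ⊆ ℝⁿ` be a
nonempty compact set with nonempty boundary, `V` continuous, `β` the minimum of
`V` over `∂P`, and `P* = {y ∈ P | V y < β}`. If a continuous trajectory `x`
starts in `P*` and `V ∘ x` has a nonpositive right derivative wherever the
trajectory is in `P`, then the trajectory stays in `P*` forever. -/
theorem sublevel_region_positively_invariant
    (n : ℕ) (P : Set (Fin n → ℝ)) (hPc : IsCompact P) (hPne : P.Nonempty)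
    (hfr : (frontier P).Nonempty)
    (V : (Fin n → ℝ) → ℝ) (hV : Continuous V)
    (β : ℝ) (hβ : IsLeast (V '' frontier P) β)
    (x : ℝ → (Fin n → ℝ)) (hx : ContinuousOn x (Ici 0))
    (hx0 : x 0 ∈ P ∩ {y | V y < β})
    (hderiv : ∀ t : ℝ, 0 ≤ t → x t ∈ P →
      ∃ D : ℝ, D ≤ 0 ∧ HasDerivWithinAt (fun s => V (x s)) D (Ici t) t) :
    ∀ t : ℝ, 0 ≤ t → x t ∈ P ∩ {y | V y < β} :=
  sublevel_region_positively_invariant_general n P hPc V hV β hβ x hx hx0 hderiv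
end

section
/- Let V, φ : ℝ^n → ℝ be continuous functions with V(y) ≥ 0 for all y and φ(y) > 0 for all y ≠ 0. Let x : [0, ∞) → ℝ^n be continuous, suppose x(t) → x* as t → ∞ for some x* ∈ ℝ^n, and suppose that for every t ≥ 0 the function s ↦ V(x(s)) has a right derivative at t which is ≤ −φ(x(t)). Then x* = 0. -/
/-! If `x* ≠ 0`, then `φ (x t) ≥ c > 0` for all large `t`, so the right derivative of `V ∘ x`
stays below `-c`; by the comparison principle `V ∘ x` then decreases at least linearly and
eventually becomes negative, contradicting `V ≥ 0`. -/

open Set Filter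

theorem image_le_add_mul_sub_of_hasDerivWithinAt_Ici_le {f : ℝ → ℝ} {a b C : ℝ}
    (hf : ContinuousOn f (Icc a b))
    (hderiv : ∀ t ∈ Ico a b, ∃ D, HasDerivWithinAt f D (Ici t) t ∧ D ≤ C) :
    ∀ ⦃t⦄, t ∈ Icc a b → f t ≤ f a + C * (t - a) := by
  refine image_le_of_liminf_slope_right_le_deriv_boundary (B' := fun _ => C) hf (by simp)
    (by fun_prop) (fun t _ => ?_) fun t ht r hr => ?_
  · simpa using (((hasDerivWithinAt_id t (Ici t)).sub_const a).const_mul C).const_add (f a)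
  · obtain ⟨D, hD, hDC⟩ := hderiv t ht
    exact hD.liminf_right_slope_le (hDC.trans_lt hr)

theorem tendsto_atBot_of_hasDerivWithinAt_Ici_le_neg {f : ℝ → ℝ} {a c : ℝ} (hc : 0 < c)
    (hf : ContinuousOn f (Ici a))
    (hderiv : ∀ t, a ≤ t → ∃ D, HasDerivWithinAt f D (Ici t) t ∧ D ≤ -c) :
    Tendsto f atTop atBot := by
  have hbound : ∀ t, a ≤ t → f t ≤ f a + -c * (t - a) := fun t ht =>
    image_le_add_mul_sub_of_hasDerivWithinAt_Ici_le (hf.mono Icc_subset_Ici_self)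
      (fun s hs => hderiv s hs.1) ⟨ht, le_rfl⟩
  refine tendsto_atBot_mono' _ ((eventually_ge_atTop a).mono hbound) ?_
  exact tendsto_atBot_add_const_left _ _
    ((tendsto_atTop_add_const_right _ _ tendsto_id).const_mul_atTop_of_neg (neg_lt_zero.2 hc))

/-- **Convergence to the origin.** If `V ≥ 0` is continuous, `φ` is continuous
and positive away from the origin, `x` is a continuous trajectory converging to
`x*`, and `V ∘ x` has at every time `t ≥ 0` a right derivative at most
`-φ (x t)`, then `x* = 0`. -/
theorem limit_is_origin
    (n : ℕ) (V φ : (Fin n → ℝ) → ℝ)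
    (hV : Continuous V) (hφ : Continuous φ)
    (hVnonneg : ∀ y, 0 ≤ V y) (hφpos : ∀ y, y ≠ 0 → 0 < φ y)
    (x : ℝ → (Fin n → ℝ)) (hx : ContinuousOn x (Ici 0))
    (xstar : Fin n → ℝ)
    (hlim : Filter.Tendsto x Filter.atTop (nhds xstar))
    (hderiv : ∀ t : ℝ, 0 ≤ t →
      ∃ D : ℝ, HasDerivWithinAt (fun s => V (x s)) D (Ici t) t ∧ D ≤ -φ (x t)) :
    xstar = 0 := by
  by_contra hne
  set c := φ xstar / 2
  have hc : 0 < c := half_pos (hφpos _ hne)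
  have hφ_gt : ∀ᶠ t in atTop, c < φ (x t) :=
    (hφ.tendsto _).comp hlim |>.eventually (lt_mem_nhds (half_lt_self (hφpos _ hne)))
  obtain ⟨T, hT⟩ := (hφ_gt.and (eventually_ge_atTop 0)).exists_forall_of_atTop
  have hV_atBot : Tendsto (fun s => V (x s)) atTop atBot := by
    refine tendsto_atBot_of_hasDerivWithinAt_Ici_le_neg hc
      (hV.comp_continuousOn (hx.mono fun s hs => (hT T le_rfl).2.trans hs)) fun t ht => ?_
    obtain ⟨D, hD, hDle⟩ := hderiv t (hT t ht).2
    exact ⟨D, hD, hDle.trans (neg_le_neg (hT t ht).1.le)⟩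
  obtain ⟨t, ht⟩ := (hV_atBot.eventually (eventually_lt_atBot 0)).exists
  exact (hVnonneg _).not_gt ht
end
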